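/- For every d ∈ H_b, both right multiplication x ↦ xd and left multiplication x ↦ dx are automorphisms of the poset (WH_b, ≤), i.e., x ≤ y if and only if xd ≤ yd, and x ≤ y if and only if dx ≤ dy. -/

import Mathlib

noncomputable section

open scoped Pointwise

/-- The general linear group `GL_n(K)`. -/
abbrev GLn (K : Type) [Field K] (n : ℕ) : Type := GL (Fin n) K

/-- `g` is a permutation matrix. -/
def IsPermMat {K : Type} [Field K] {n : ℕ} (g : GLn K n) : Prop :=
  ∃ σ : Equiv.Perm (Fin n),
    ∀ i j : Fin n, (g : Matrix (Fin n) (Fin n) K) i j = if σ j = i then 1 else 0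

/-- `W`, the group of permutation matrices in `GL_n(K)`. -/
def Wset (K : Type) [Field K] (n : ℕ) : Set (GLn K n) := {g | IsPermMat g}

/-- The set `S = {s_1, …, s_{n-1}}` of Coxeter generators of `W`: the matrices of the
adjacent transpositions `(i, i+1)`. -/
def Sset (K : Type) [Field K] (n : ℕ) : Set (GLn K n) :=
  {g | ∃ i j : Fin n, (i : ℕ) + 1 = (j : ℕ) ∧
    ∀ k l : Fin n, (g : Matrix (Fin n) (Fin n) K) k l = if Equiv.swap i j l = k then 1 else 0}

/-- The set `𝒯 = { w s_i w⁻¹ : w ∈ W, s_i ∈ S }` of reflections of `W`. -/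
def Tset (K : Type) [Field K] (n : ℕ) : Set (GLn K n) :=
  {t | ∃ w ∈ Wset K n, ∃ s ∈ Sset K n, t = w * s * w⁻¹}

/-- `H_b`: the group of diagonal matrices whose entries are `b`-th roots of unity
(i.e. entries in `F_b`). -/
def Hbset (K : Type) [Field K] (n b : ℕ) : Set (GLn K n) :=
  {g | (∀ i j : Fin n, i ≠ j → (g : Matrix (Fin n) (Fin n) K) i j = 0) ∧
    ∀ i : Fin n, (g : Matrix (Fin n) (Fin n) K) i i ^ b = 1}

/-- The group `WH_b`: the set of products `w * d` with `w ∈ W` and `d ∈ H_b`. -/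
def WHbset (K : Type) [Field K] (n b : ℕ) : Set (GLn K n) :=
  {x | ∃ w ∈ Wset K n, ∃ d ∈ Hbset K n b, x = w * d}

/-- The length function on monomial matrices: the number of inversions of the underlying
permutation.  For `x = w d ∈ WH_b` this is the Coxeter length `ℓ(w)`, i.e. `len` is the
length function of `W` lifted to `WH_b` via `ℓ(wd) = ℓ(dw) = ℓ(w)`. -/
def len {K : Type} [Field K] {n : ℕ} (g : GLn K n) : ℕ :=
  Set.ncard {p : Fin n × Fin n | p.1 < p.2 ∧ ∃ i i' : Fin n, i' < i ∧
    (g : Matrix (Fin n) (Fin n) K) i p.1 ≠ 0 ∧ (g : Matrix (Fin n) (Fin n) K) i' p.2 ≠ 0}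

/-- The diagonal matrix `h_{k,l}(α) = h_k(α) h_l((-1)^{b-1} α⁻¹)`. -/
def hmat (K : Type) [Field K] {n : ℕ} (b : ℕ) (k l : Fin n) (α : K) :
    Matrix (Fin n) (Fin n) K :=
  Matrix.diagonal fun p => if p = k then α else if p = l then (-1 : K) ^ (b - 1) * α⁻¹ else 1

/-- For a reflection `t` interchanging the `k`-th and `l`-th standard basis vectors
(`t = w s_i w⁻¹`), the subset `X_t = { w h_{i,i+1}(α) w⁻¹ : α ∈ F_b } =
{ h_{k,l}(α) : α^b = 1 }` of `H_b`. -/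
def Xset (K : Type) [Field K] (n b : ℕ) (t : GLn K n) : Set (GLn K n) :=
  {d | ∃ k l : Fin n, ∃ α : K, α ^ b = 1 ∧ k ≠ l ∧
    (∀ p q : Fin n, (t : Matrix (Fin n) (Fin n) K) p q = if Equiv.swap k l q = p then 1 else 0) ∧
    (d : Matrix (Fin n) (Fin n) K) = hmat K b k l α}

/-- `X_s = { h_{k,l}(α) : α^b = 1 }` for the simple reflection `s` interchanging the
`k`-th and `l`-th standard basis vectors. -/
def XsPair (K : Type) [Field K] {n : ℕ} (b : ℕ) (k l : Fin n) : Set (GLn K n) :=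
  {d | ∃ α : K, α ^ b = 1 ∧ (d : Matrix (Fin n) (Fin n) K) = hmat K b k l α}

/-- The product `X_1 ⋯ X_r` of a list of subsets of a monoid. -/
def SetProd {G : Type} [Monoid G] : List (Set G) → Set G
  | [] => {1}
  | X :: L => X * SetProd L

/-- `U`: the group of upper triangular unipotent matrices. -/
def Uset (K : Type) [Field K] (n : ℕ) : Set (GLn K n) :=
  {g | (∀ i j : Fin n, j < i → (g : Matrix (Fin n) (Fin n) K) i j = 0) ∧
    ∀ i : Fin n, (g : Matrix (Fin n) (Fin n) K) i i = 1}

/-- `H_a`: the group of diagonal matrices with entries in `F_a` (the `a`-th roots of unity). -/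
def Haset (K : Type) [Field K] (n a : ℕ) : Set (GLn K n) :=
  {g | (∀ i j : Fin n, i ≠ j → (g : Matrix (Fin n) (Fin n) K) i j = 0) ∧
    ∀ i : Fin n, (g : Matrix (Fin n) (Fin n) K) i i ^ a = 1}

/-- `B_a = H_a U`. -/
def Baset (K : Type) [Field K] (n a : ℕ) : Set (GLn K n) :=
  {g | ∃ h ∈ Haset K n a, ∃ u ∈ Uset K n, g = h * u}

/-- `A_v = ℤ[a, v, v⁻¹]`, realized as polynomials in the indeterminate `a` with
coefficients Laurent polynomials in the indeterminate `v`. -/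
abbrev Av : Type := Polynomial (LaurentPolynomial ℤ)

/-- The indeterminate `a` of `A_v`. -/
def aA : Av := Polynomial.X

/-- The indeterminate `v` of `A_v`. -/
def vA : Av := Polynomial.C (LaurentPolynomial.T 1)

/-- `v⁻¹ ∈ A_v`. -/
def vI : Av := Polynomial.C (LaurentPolynomial.T (-1))

/-!
For `d ∈ H_b` we have `T_x T_d = T_{xd}` and `T_d T_x = T_{dx}`, so `T_d` is a unit with inverse
`T_{d⁻¹}`; as `overline(T_x)` is the inverse of `T_{x⁻¹}`, this gives
`overline(T_{yd}) = overline(T_y) T_d` and `overline(T_{dy}) = T_d overline(T_y)`. Right (left)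
multiplication by `T_d` permutes the standard basis along `x ↦ xd` (`x ↦ dx`), so comparing
coefficients gives `overline(R*_{xd,yd}) = overline(R*_{x,y}) = overline(R*_{dx,dy})`. The bar map
of `A_v` is an involution, hence injective, so the `R*` themselves vanish simultaneously.
Finiteness of `WH_b` is what makes the `finsum` expanding `overline(T_y)` a genuine finite sum.
-/

section MonomialMatrices

variable {K : Type} [Field K] {n b : ℕ}

theorem perm_mul_apply {σ : Equiv.Perm (Fin n)} {P : Matrix (Fin n) (Fin n) K}
    (hP : ∀ i j, P i j = if σ j = i then 1 else 0) (M : Matrix (Fin n) (Fin n) K) (i j : Fin n) :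
    (P * M) i j = M (σ⁻¹ i) j := by
  simp [Matrix.mul_apply, hP, ← Equiv.eq_symm_apply]

theorem mul_perm_apply {σ : Equiv.Perm (Fin n)} {P : Matrix (Fin n) (Fin n) K}
    (hP : ∀ i j, P i j = if σ j = i then 1 else 0) (M : Matrix (Fin n) (Fin n) K) (i j : Fin n) :
    (M * P) i j = M i (σ j) := by
  simp [Matrix.mul_apply, hP]

theorem inv_apply_of_perm {w : GLn K n} {σ : Equiv.Perm (Fin n)}
    (hw : ∀ i j, (w : Matrix (Fin n) (Fin n) K) i j = if σ j = i then 1 else 0) (i j : Fin n) :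
    (↑w⁻¹ : Matrix (Fin n) (Fin n) K) i j = if σ⁻¹ j = i then 1 else 0 := by
  have hinv : (w : Matrix (Fin n) (Fin n) K) * Matrix.of (fun i j => if σ⁻¹ j = i then 1 else 0)
      = 1 := by
    ext i j
    simp [perm_mul_apply hw, Matrix.one_apply, eq_comm]
  rw [Units.inv_eq_of_mul_eq_one_right hinv, Matrix.of_apply]

theorem one_mem_Wset : (1 : GLn K n) ∈ Wset K n :=
  ⟨1, fun i j => by simp [Matrix.one_apply, eq_comm]⟩

theorem inv_mem_Wset {w : GLn K n} (hw : w ∈ Wset K n) : w⁻¹ ∈ Wset K n :=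
  let ⟨σ, hσ⟩ := hw
  ⟨σ⁻¹, inv_apply_of_perm hσ⟩

theorem mem_Hbset_of_eq_diagonal {g : GLn K n} {f : Fin n → K}
    (hg : (g : Matrix (Fin n) (Fin n) K) = Matrix.diagonal f) (hf : ∀ i, f i ^ b = 1) :
    g ∈ Hbset K n b :=
  ⟨fun i j hij => by rw [hg, Matrix.diagonal_apply_ne _ hij],
    fun i => by rw [hg, Matrix.diagonal_apply_eq, hf]⟩

theorem eq_diagonal_of_mem_Hbset {d : GLn K n} (hd : d ∈ Hbset K n b) :
    (d : Matrix (Fin n) (Fin n) K) = Matrix.diagonal fun i => (d : Matrix _ _ K) i i := by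
  ext i j
  rcases eq_or_ne i j with rfl | hij
  · rw [Matrix.diagonal_apply_eq]
  · rw [hd.1 i j hij, Matrix.diagonal_apply_ne _ hij]

theorem mul_mem_Hbset {d d' : GLn K n} (hd : d ∈ Hbset K n b) (hd' : d' ∈ Hbset K n b) :
    d * d' ∈ Hbset K n b := by
  refine mem_Hbset_of_eq_diagonal (f := fun i => (d : Matrix _ _ K) i i * (d' : Matrix _ _ K) i i)
    ?_ fun i => by rw [mul_pow, hd.2, hd'.2, one_mul]
  rw [Units.val_mul, eq_diagonal_of_mem_Hbset hd, eq_diagonal_of_mem_Hbset hd',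
    Matrix.diagonal_mul_diagonal]
  simp

theorem inv_mem_Hbset (hb : 0 < b) {d : GLn K n} (hd : d ∈ Hbset K n b) :
    d⁻¹ ∈ Hbset K n b := by
  have hne : ∀ i, (d : Matrix (Fin n) (Fin n) K) i i ≠ 0 := fun i =>
    (pow_ne_zero_iff hb.ne').mp (by rw [hd.2]; exact one_ne_zero)
  refine mem_Hbset_of_eq_diagonal (f := fun i => ((d : Matrix _ _ K) i i)⁻¹)
    (Units.inv_eq_of_mul_eq_one_right ?_) fun i => by rw [inv_pow, hd.2, inv_one]
  nth_rw 1 [eq_diagonal_of_mem_Hbset hd]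
  rw [Matrix.diagonal_mul_diagonal, ← Matrix.diagonal_one]
  exact congrArg Matrix.diagonal (funext fun i => mul_inv_cancel₀ (hne i))

theorem conj_mem_Hbset {w d : GLn K n} (hw : w ∈ Wset K n) (hd : d ∈ Hbset K n b) :
    w * d * w⁻¹ ∈ Hbset K n b := by
  obtain ⟨σ, hσ⟩ := hw
  have hconj : ∀ i j, (↑(w * d * w⁻¹) : Matrix (Fin n) (Fin n) K) i j
      = (d : Matrix (Fin n) (Fin n) K) (σ⁻¹ i) (σ⁻¹ j) := by
    intro i j
    rw [Units.val_mul, mul_perm_apply (inv_apply_of_perm hσ), Units.val_mul, perm_mul_apply hσ]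
  refine ⟨fun i j hij => ?_, fun i => ?_⟩ <;> rw [hconj]
  · exact hd.1 _ _ (by simpa using hij)
  · exact hd.2 _

theorem mem_WHbset_of_mem_Hbset {d : GLn K n} (hd : d ∈ Hbset K n b) : d ∈ WHbset K n b :=
  ⟨1, one_mem_Wset, d, hd, (one_mul d).symm⟩

theorem mul_Hbset_mem_WHbset {x d : GLn K n} (hx : x ∈ WHbset K n b)
    (hd : d ∈ Hbset K n b) : x * d ∈ WHbset K n b := by
  obtain ⟨w, hw, d', hd', rfl⟩ := hx
  exact ⟨w, hw, d' * d, mul_mem_Hbset hd' hd, mul_assoc w d' d⟩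

theorem Hbset_mul_mem_WHbset {x d : GLn K n} (hx : x ∈ WHbset K n b)
    (hd : d ∈ Hbset K n b) : d * x ∈ WHbset K n b := by
  obtain ⟨w, hw, d', hd', rfl⟩ := hx
  refine ⟨w, hw, w⁻¹ * d * w * d', mul_mem_Hbset ?_ hd', by group⟩
  simpa using conj_mem_Hbset (inv_mem_Wset hw) hd

theorem inv_mem_WHbset (hb : 0 < b) {x : GLn K n} (hx : x ∈ WHbset K n b) :
    x⁻¹ ∈ WHbset K n b := by
  obtain ⟨w, hw, d, hd, rfl⟩ := hx
  exact ⟨w⁻¹, inv_mem_Wset hw, w * d⁻¹ * w⁻¹, conj_mem_Hbset hw (inv_mem_Hbset hb hd),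
    by group⟩

theorem finite_WHbset (hb : 0 < b) : (WHbset K n b).Finite := by
  let F : Set K := {z | Polynomial.IsRoot (Polynomial.X ^ b - 1) z} ∪ {0}
  have hF : F.Finite :=
    (Polynomial.finite_setOfPred_isRoot (Polynomial.X_pow_sub_C_ne_zero hb 1)).union
      (Set.finite_singleton 0)
  have hentries : WHbset K n b ⊆ (fun g : GLn K n => (g : Matrix (Fin n) (Fin n) K)) ⁻¹'
      Set.univ.pi fun _ => Set.univ.pi fun _ => F := by
    rintro _ ⟨w, ⟨σ, hσ⟩, d, hd, rfl⟩ i - j -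
    change ((w * d : GLn K n) : Matrix (Fin n) (Fin n) K) i j ∈ F
    rw [Units.val_mul, perm_mul_apply hσ]
    by_cases hij : σ⁻¹ i = j
    · subst hij
      exact Or.inl (by simp [hd.2])
    · exact Or.inr (hd.1 _ _ hij)
  have hinj : Function.Injective fun g : GLn K n => (g : Matrix (Fin n) (Fin n) K) :=
    fun _ _ => Units.ext
  exact ((Set.Finite.pi fun _ => Set.Finite.pi fun _ => hF).preimage hinj.injOn).subset hentries

end MonomialMatrices

theorem vA_mul_vI : vA * vI = 1 := by
  rw [vA, vI, ← Polynomial.C_mul, ← LaurentPolynomial.T_add, add_neg_cancel,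
    LaurentPolynomial.T_zero, Polynomial.C_1]

theorem barA_involutive (barA : Av →+* Av) (hv : barA vA = vI) (ha : barA aA = -(aA * vI ^ 2)) :
    Function.Involutive barA := by
  have hvI : barA vI = vA := by
    have h : vI * barA vI = 1 := by rw [← map_one barA, ← vA_mul_vI, map_mul, hv]
    exact (left_inv_eq_right_inv vA_mul_vI h).symm
  have hC : (barA.comp barA).comp Polynomial.C = Polynomial.C := by
    refine AddMonoidAlgebra.ringHom_ext' (RingHom.ext_int _ _) (MonoidHom.ext_mint ?_)
    change barA (barA vA) = vA
    rw [hv, hvI]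
  have hX : barA (barA aA) = aA := by
    rw [ha, map_neg, map_mul, map_pow, ha, hvI]
    linear_combination aA * (vA * vI + 1) * vA_mul_vI
  suffices barA.comp barA = RingHom.id Av from fun p => RingHom.congr_fun this p
  exact Polynomial.ringHom_ext' hC hX

theorem Module.Basis.repr_finsum_mem_smul {G R M : Type*} [CommSemiring R] [AddCommMonoid M]
    [Module R M] {S : Set G} [Fintype S] (bv : Module.Basis S R M) {T : G → M}
    (hbv : ∀ x : S, bv x = T x) (c : G → R) (x : S) :
    bv.repr (∑ᶠ g ∈ S, c g • T g) x = c x := by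
  rw [← finsum_subtype_eq_finsum_cond, finsum_eq_sum_of_fintype]
  simp_rw [← hbv]
  rw [bv.repr_sum_self (fun g : S => c g)]

theorem Module.Basis.repr_apply_of_map_basis {ι R M : Type*} [Semiring R] [AddCommMonoid M]
    [Module R M] (bv : Module.Basis ι R M) (f : M →ₗ[R] M) {e : ι → ι}
    (he : Function.Injective e) (hf : ∀ i, f (bv i) = bv (e i)) (h : M) (i : ι) :
    bv.repr (f h) (e i) = bv.repr h i := by
  have : (Finsupp.lapply (e i)).comp (bv.repr.toLinearMap.comp f) =
      (Finsupp.lapply i).comp bv.repr.toLinearMap :=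
    bv.ext fun j => by simp [hf, Finsupp.single_apply_left he]
  exact LinearMap.congr_fun this h

theorem Module.Basis.coeff_eq_of_map_finsum_mem {G R M : Type*} [CommSemiring R]
    [AddCommMonoid M] [Module R M] {S : Set G} [Fintype S] (bv : Module.Basis S R M) {T : G → M}
    (hbv : ∀ x : S, bv x = T x) (f : M →ₗ[R] M) {φ : G → G} (hφ : Function.Injective φ)
    (hφS : Set.MapsTo φ S S) (hf : ∀ x ∈ S, f (T x) = T (φ x)) {c c' : G → R}
    (hc : f (∑ᶠ g ∈ S, c g • T g) = ∑ᶠ g ∈ S, c' g • T g) {x : G} (hx : x ∈ S) :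
    c' (φ x) = c x := by
  have key := bv.repr_apply_of_map_basis f ((hφS.restrict_inj).mpr hφ.injOn)
    (fun z => by simp [hbv, hf z z.2]) (∑ᶠ g ∈ S, c g • T g) ⟨x, hx⟩
  rwa [hc, bv.repr_finsum_mem_smul hbv, bv.repr_finsum_mem_smul hbv] at key

theorem bar_T_mul_of_mem_Hbset {K : Type} [Field K] {n b : ℕ} (hb : 0 < b) {Hv : Type}
    [Monoid Hv] {T : GLn K n → Hv} {barH : Hv → Hv} (hT1 : T 1 = 1)
    (hTd : ∀ d ∈ Hbset K n b, ∀ x ∈ WHbset K n b,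
      T d * T x = T (d * x) ∧ T x * T d = T (x * d))
    (hbarHT : ∀ x ∈ WHbset K n b, barH (T x) * T x⁻¹ = 1 ∧ T x⁻¹ * barH (T x) = 1)
    {d y : GLn K n} (hd : d ∈ Hbset K n b) (hy : y ∈ WHbset K n b) :
    barH (T (y * d)) = barH (T y) * T d ∧ barH (T (d * y)) = T d * barH (T y) := by
  have hdinv := inv_mem_Hbset hb hd
  have hTdinv : T d⁻¹ * T d = 1 := by
    rw [(hTd _ hdinv d (mem_WHbset_of_mem_Hbset hd)).1, inv_mul_cancel, hT1]
  have hTinv := hTd _ hdinv y⁻¹ (inv_mem_WHbset hb hy)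
  constructor
  · refine left_inv_eq_right_inv (hbarHT _ (mul_Hbset_mem_WHbset hy hd)).1 ?_
    calc T (y * d)⁻¹ * (barH (T y) * T d)
        = T d⁻¹ * (T y⁻¹ * barH (T y)) * T d := by
          rw [mul_inv_rev, ← hTinv.1]; simp only [mul_assoc]
      _ = 1 := by rw [(hbarHT y hy).2, mul_one, hTdinv]
  · refine left_inv_eq_right_inv (hbarHT _ (Hbset_mul_mem_WHbset hy hd)).1 ?_
    calc T (d * y)⁻¹ * (T d * barH (T y))
        = T y⁻¹ * (T d⁻¹ * T d) * barH (T y) := by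
          rw [mul_inv_rev, ← hTinv.2]; simp only [mul_assoc]
      _ = 1 := by rw [hTdinv, mul_one, (hbarHT y hy).2]

theorem multiplication_by_d_poset_automorphism_general (n b : ℕ) (hb : 0 < b)
    (Hv : Type) [Ring Hv] [Algebra Av Hv]
    (T : GLn ℂ n → Hv)
    (bv : Module.Basis ↥(WHbset ℂ n b) Av Hv)
    (hbv : ∀ x : ↥(WHbset ℂ n b), bv x = T ↑x)
    (hT1 : T 1 = 1)
    (hTd : ∀ d ∈ Hbset ℂ n b, ∀ x ∈ WHbset ℂ n b,
      T d * T x = T (d * x) ∧ T x * T d = T (x * d))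
    (barA : Av →+* Av)
    (hbarv : barA vA = vI) (hbara : barA aA = -(aA * vI ^ 2))
    (barH : Hv → Hv)
    (hbarHT : ∀ x ∈ WHbset ℂ n b, barH (T x) * T x⁻¹ = 1 ∧ T x⁻¹ * barH (T x) = 1)
    (Rp : GLn ℂ n → GLn ℂ n → Av)
    (hRp : ∀ y ∈ WHbset ℂ n b, barH (T y) = ∑ᶠ x ∈ WHbset ℂ n b, barA (Rp x y) • T x) :
    ∀ d ∈ Hbset ℂ n b, ∀ x ∈ WHbset ℂ n b, ∀ y ∈ WHbset ℂ n b,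
      (Rp x y ≠ 0 ↔ Rp (x * d) (y * d) ≠ 0) ∧
      (Rp x y ≠ 0 ↔ Rp (d * x) (d * y) ≠ 0) := by
  have : Fintype (WHbset ℂ n b) := (finite_WHbset hb).fintype
  have hbarA := (barA_involutive barA hbarv hbara).injective
  intro d hd x hx y hy
  obtain ⟨hright, hleft⟩ := bar_T_mul_of_mem_Hbset hb hT1 hTd hbarHT hd hy
  constructor
  · have key := bv.coeff_eq_of_map_finsum_mem hbv (LinearMap.mulRight Av (T d))
      (mul_left_injective d) (fun z hz => mul_Hbset_mem_WHbset hz hd)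
      (fun z hz => (hTd d hd z hz).2) (c := fun z => barA (Rp z y))
      (c' := fun z => barA (Rp z (y * d)))
      (by rw [LinearMap.mulRight_apply, ← hRp y hy, ← hright,
        hRp _ (mul_Hbset_mem_WHbset hy hd)]) hx
    rw [hbarA key]
  · have key := bv.coeff_eq_of_map_finsum_mem hbv (LinearMap.mulLeft Av (T d))
      (mul_right_injective d) (fun z hz => Hbset_mul_mem_WHbset hz hd)
      (fun z hz => (hTd d hd z hz).1) (c := fun z => barA (Rp z y))
      (c' := fun z => barA (Rp z (d * y)))
      (by rw [LinearMap.mulLeft_apply, ← hRp y hy, ← hleft,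
        hRp _ (Hbset_mul_mem_WHbset hy hd)]) hx
    rw [hbarA key]

/-- For every `d ∈ H_b`, right and left multiplication by `d` are
automorphisms of the poset `(WH_b, ≤)`, where `x ≤ y ↔ R*_{x,y} ≠ 0`. -/
theorem multiplication_by_d_poset_automorphism (n b : ℕ) (hn : 0 < n) (hb : 0 < b)
    (Hv : Type) [Ring Hv] [Algebra Av Hv]
    (T : GLn ℂ n → Hv)
    (bv : Module.Basis ↥(WHbset ℂ n b) Av Hv)
    (hbv : ∀ x : ↥(WHbset ℂ n b), bv x = T ↑x)
    (hT1 : T 1 = 1)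
    (hTd : ∀ d ∈ Hbset ℂ n b, ∀ x ∈ WHbset ℂ n b,
      T d * T x = T (d * x) ∧ T x * T d = T (x * d))
    (hTsL : ∀ s ∈ Sset ℂ n, ∀ x ∈ WHbset ℂ n b,
      (len x < len (s * x) → T s * T x = T (s * x)) ∧
      (len (s * x) < len x →
        T s * T x = T (s * x) + (aA * vI) • ∑ᶠ d ∈ Xset ℂ n b s, T (d * x)))
    (hTsR : ∀ s ∈ Sset ℂ n, ∀ x ∈ WHbset ℂ n b,
      (len x < len (x * s) → T x * T s = T (x * s)) ∧
      (len (x * s) < len x →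
        T x * T s = T (x * s) + (aA * vI) • ∑ᶠ d ∈ Xset ℂ n b s, T (x * d)))
    (barA : Av →+* Av)
    (hbarv : barA vA = vI) (hbara : barA aA = -(aA * vI ^ 2))
    (barH : Hv → Hv)
    (hbarHadd : ∀ h h' : Hv, barH (h + h') = barH h + barH h')
    (hbarHsmul : ∀ (c : Av) (h : Hv), barH (c • h) = barA c • barH h)
    (hbarHT : ∀ x ∈ WHbset ℂ n b, barH (T x) * T x⁻¹ = 1 ∧ T x⁻¹ * barH (T x) = 1)
    (Rp : GLn ℂ n → GLn ℂ n → Av)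
    (hRp : ∀ y ∈ WHbset ℂ n b, barH (T y) = ∑ᶠ x ∈ WHbset ℂ n b, barA (Rp x y) • T x) :
    ∀ d ∈ Hbset ℂ n b, ∀ x ∈ WHbset ℂ n b, ∀ y ∈ WHbset ℂ n b,
      (Rp x y ≠ 0 ↔ Rp (x * d) (y * d) ≠ 0) ∧
      (Rp x y ≠ 0 ↔ Rp (d * x) (d * y) ≠ 0) :=
  multiplication_by_d_poset_automorphism_general n b hb Hv T bv hbv hT1 hTd barA hbarv hbara barH
    hbarHT Rp hRp
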